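/- With B(X,Y) as in the complete bipartite setting, in the intermediate product (B(X,Y)/Y) \boxtimes (B(X,Y)/X) every vertex of the form (u_i, v_j) with u_i in X and v_j in Y, and the vertex (\tilde{y}, \tilde{x}), has in-degree 0 and out-degree 0, while each such vertex has positive level in the Cartesian product (B(X,Y)/Y) \Box (B(X,Y)/X). Consequently the vertex set of (B(X,Y)/Y) \boxbackslash (B(X,Y)/X) is exactly {(u_i, \tilde{x}) : u_i in X} \cup {(\tilde{y}, v_j) : v_j in Y}. -/

import Mathlib

/-- A labelled directed multigraph: vertex type `V`, arc type `A`, label type `L`,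
incidence function `mu` giving (tail, head), and arc labelling `lab`. -/
structure LDMG (V A L : Type) where
  mu : A → V × V
  lab : A → L

namespace LDMG

variable {V A L V' A' : Type}

/-- The one-step arc relation. -/
def step (G : LDMG V A L) (u v : V) : Prop := ∃ a, G.mu a = (u, v)

/-- `G` is acyclic: no directed cycle. -/
def Acyclic (G : LDMG V A L) : Prop := ∀ v, ¬ Relation.TransGen G.step v v

/-- `v` has in-degree 0 in `G`. -/
def InDegZero (G : LDMG V A L) (v : V) : Prop := ∀ a, (G.mu a).2 ≠ v

/-- `v` has out-degree 0 in `G`. -/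
def OutDegZero (G : LDMG V A L) (v : V) : Prop := ∀ a, (G.mu a).1 ≠ v

/-- `peel G n`: the set of vertices deleted after `n` rounds of repeatedly removing the
vertices of in-degree 0 (together with the arcs with tails there). -/
def peel (G : LDMG V A L) : ℕ → Set V
  | 0 => ∅
  | n + 1 => peel G n ∪ {v | ∀ a, (G.mu a).2 = v → (G.mu a).1 ∈ peel G n}

/-- The level set `S^n(G)`. -/
def levelSet (G : LDMG V A L) (n : ℕ) : Set V := peel G (n + 1) \ peel G n

/-- Vertex type of the contraction `G/X`: the vertices outside `X` together with one new
vertex (`Sum.inr ()`) replacing `X`. -/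
def CVertex (X : Set V) : Type := {v : V // v ∉ X} ⊕ Unit

/-- Canonical projection of vertices to contraction vertices. -/
noncomputable def cMap (X : Set V) (v : V) : CVertex X :=
  haveI := Classical.propDecidable (v ∈ X)
  if h : v ∈ X then Sum.inr () else Sum.inl ⟨v, h⟩

/-- The arcs of `G` surviving the contraction of `X` (i.e. not having both ends in `X`),
before identification of parallel equally-labelled arcs. -/
def CPre (G : LDMG V A L) (X : Set V) : Type :=
  {a : A // ¬ ((G.mu a).1 ∈ X ∧ (G.mu a).2 ∈ X)}

noncomputable def cKey (G : LDMG V A L) (X : Set V) (a : CPre G X) :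
    (CVertex X × CVertex X) × L :=
  ((cMap X (G.mu a.1).1, cMap X (G.mu a.1).2), G.lab a.1)

/-- Arc type of `G/X`: surviving arcs, with arcs having identical tail, head and label
identified. -/
def CArc (G : LDMG V A L) (X : Set V) : Type :=
  Quotient (Setoid.ker (cKey G X))

/-- The contraction `G/X`. -/
noncomputable def contract (G : LDMG V A L) (X : Set V) : LDMG (CVertex X) (CArc G X) L where
  mu := Quotient.lift (fun a => (cKey G X a).1) (fun _ _ h => congrArg Prod.fst h)
  lab := Quotient.lift (fun a => (cKey G X a).2) (fun _ _ h => congrArg Prod.snd h)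

/-- The Cartesian product `G □ H`. -/
def box (G : LDMG V A L) (H : LDMG V' A' L) : LDMG (V × V') (A × V' ⊕ V × A') L where
  mu := fun x =>
    match x with
    | Sum.inl (a, w) => (((G.mu a).1, w), ((G.mu a).2, w))
    | Sum.inr (u, b) => ((u, (H.mu b).1), (u, (H.mu b).2))
  lab := fun x =>
    match x with
    | Sum.inl (a, _) => G.lab a
    | Sum.inr (_, b) => H.lab b

/-- The label `ℓ` occurs in `G`. -/
def HasLab (G : LDMG V A L) (ℓ : L) : Prop := ∃ a, G.lab a = ℓ

/-- Arc type of the intermediate product `G ⊠ H`: asynchronous copies of arcs of `G`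
(whose label does not occur in `H`), asynchronous copies of arcs of `H` (whose label
does not occur in `G`), and synchronous arcs for pairs of equally labelled arcs. -/
def InterArc (G : LDMG V A L) (H : LDMG V' A' L) : Type :=
  {p : A × V' // ¬ H.HasLab (G.lab p.1)} ⊕
  {p : V × A' // ¬ G.HasLab (H.lab p.2)} ⊕
  {p : A × A' // G.lab p.1 = H.lab p.2}

/-- The intermediate product `G ⊠ H`. -/
def inter (G : LDMG V A L) (H : LDMG V' A' L) : LDMG (V × V') (InterArc G H) L where
  mu := fun x =>
    match x with
    | Sum.inl ⟨(a, w), _⟩ => (((G.mu a).1, w), ((G.mu a).2, w))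
    | Sum.inr (Sum.inl ⟨(u, b), _⟩) => ((u, (H.mu b).1), (u, (H.mu b).2))
    | Sum.inr (Sum.inr ⟨(a, b), _⟩) => (((G.mu a).1, (H.mu b).1), ((G.mu a).2, (H.mu b).2))
  lab := fun x =>
    match x with
    | Sum.inl ⟨(a, _), _⟩ => G.lab a
    | Sum.inr (Sum.inl ⟨(_, b), _⟩) => H.lab b
    | Sum.inr (Sum.inr ⟨(a, _), _⟩) => G.lab a

/-- `v` has positive level in `G □ H`, i.e. some in-arc in the Cartesian product. -/
def PosLevelBox (G : LDMG V A L) (H : LDMG V' A' L) (v : V × V') : Prop :=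
  ∃ x, ((G.box H).mu x).2 = v

/-- The set of vertices removed after `n` rounds of the VRSP removal process: repeatedly
remove the vertices having in-degree 0 in the current graph but positive level in `G □ H`
(together with their out-arcs). -/
def vrspRem (G : LDMG V A L) (H : LDMG V' A' L) : ℕ → Set (V × V')
  | 0 => ∅
  | n + 1 => vrspRem G H n ∪
      {v | PosLevelBox G H v ∧
        ∀ x, ((G.inter H).mu x).2 = v → ((G.inter H).mu x).1 ∈ vrspRem G H n}

/-- All vertices eventually removed in the VRSP removal process. -/
def vrspRemoved (G : LDMG V A L) (H : LDMG V' A' L) : Set (V × V') := ⋃ n, vrspRem G H n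

/-- Vertex type of the vertex-removing synchronised product `G ⊟ H`. -/
def VrspV (G : LDMG V A L) (H : LDMG V' A' L) : Type := {v : V × V' // v ∉ vrspRemoved G H}

/-- Arc type of `G ⊟ H`: arcs of `G ⊠ H` with both ends surviving. -/
def VrspArc (G : LDMG V A L) (H : LDMG V' A' L) : Type :=
  {x : InterArc G H // ((G.inter H).mu x).1 ∉ vrspRemoved G H ∧
    ((G.inter H).mu x).2 ∉ vrspRemoved G H}

/-- The vertex-removing synchronised product `G ⊟ H`. -/
def vrsp (G : LDMG V A L) (H : LDMG V' A' L) : LDMG (VrspV G H) (VrspArc G H) L where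
  mu := fun x => (⟨((G.inter H).mu x.1).1, x.2.1⟩, ⟨((G.inter H).mu x.1).2, x.2.2⟩)
  lab := fun x => (G.inter H).lab x.1

/-- Isomorphism of labelled directed multigraphs: a vertex bijection preserving the
existence of arcs together with their labels. -/
def Iso (G : LDMG V A L) {V' A' : Type} (H : LDMG V' A' L) : Prop :=
  ∃ φ : V ≃ V', ∀ u v ℓ,
    (∃ a, G.mu a = (u, v) ∧ G.lab a = ℓ) ↔ (∃ b, H.mu b = (φ u, φ v) ∧ H.lab b = ℓ)

end LDMG

/-!
In `B(X,Y)/Y` every arc runs from a vertex of `X` into `ỹ`, and in `B(X,Y)/X` every arc runs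
from `x̃` into a vertex of `Y`. Since both contractions carry the single label `ℓ`, every arc of
the intermediate product is synchronous, of the form `(u, x̃) → (ỹ, v)`. So `(u, v)` and
`(ỹ, x̃)` are isolated there, yet have an in-arc in the Cartesian product: they are removed in
the first round. The vertices `(u, x̃)` have level 0 in the Cartesian product and are never
removed, and each `(ỹ, v)` keeps the in-arc from the surviving `(x₀, x̃)`.
-/

namespace LDMG

variable {V A L V' A' : Type}

section Contraction

variable {X : Set V}

theorem cMap_of_mem {v : V} (hv : v ∈ X) : cMap X v = Sum.inr () := by
  simp [cMap, hv]
  rfl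

theorem cMap_of_notMem {v : V} (hv : v ∉ X) : cMap X v = Sum.inl ⟨v, hv⟩ := by
  simp [cMap, hv]
  rfl

theorem cMap_eq_inr_iff {v : V} : cMap X v = Sum.inr () ↔ v ∈ X := by
  by_cases hv : v ∈ X
  · exact iff_of_true (cMap_of_mem hv) hv
  · simp [cMap_of_notMem hv, hv]

theorem cVertex_eq_inr_or_cMap (w : CVertex X) : w = Sum.inr () ∨ ∃ v ∉ X, w = cMap X v := by
  rcases w with ⟨v, hv⟩ | ⟨⟩
  · exact Or.inr ⟨v, hv, (cMap_of_notMem hv).symm⟩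
  · exact Or.inl rfl

theorem contract_lab_eq {G : LDMG V A L} {ℓ : L} (hlab : ∀ a, G.lab a = ℓ)
    (c : CArc G X) : (G.contract X).lab c = ℓ :=
  Quotient.ind (motive := fun c => (G.contract X).lab c = ℓ) (fun a => hlab a.1) c

theorem hasLab_contract {G : LDMG V A L} (a : CPre G X) : (G.contract X).HasLab (G.lab a.1) :=
  ⟨Quotient.mk _ a, rfl⟩

theorem contract_inDegZero {G : LDMG V A L} {w : CVertex X}
    (hw : ∀ a, cMap X (G.mu a).2 ≠ w) : (G.contract X).InDegZero w :=
  Quotient.ind fun a => hw a.1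

theorem contract_outDegZero {G : LDMG V A L} {w : CVertex X}
    (hw : ∀ a, cMap X (G.mu a).1 ≠ w) : (G.contract X).OutDegZero w :=
  Quotient.ind fun a => hw a.1

theorem not_contract_inDegZero {G : LDMG V A L} (a : CPre G X) :
    ¬ (G.contract X).InDegZero (cMap X (G.mu a.1).2) :=
  fun h => h (Quotient.mk _ a) rfl

end Contraction

section Products

variable (G : LDMG V A L) (H : LDMG V' A' L)

def LabelsShared : Prop := (∀ a, H.HasLab (G.lab a)) ∧ ∀ b, G.HasLab (H.lab b)

variable {G H}

theorem posLevelBox_iff {v : V × V'} :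
    PosLevelBox G H v ↔ ¬ G.InDegZero v.1 ∨ ¬ H.InDegZero v.2 := by
  obtain ⟨p, q⟩ := v
  simp only [PosLevelBox, InDegZero, box, not_forall, not_not]
  constructor
  · rintro ⟨⟨a, w⟩ | ⟨u, b⟩, h⟩ <;> simp only [Prod.mk.injEq] at h
    exacts [Or.inl ⟨a, h.1⟩, Or.inr ⟨b, h.2⟩]
  · rintro (⟨a, rfl⟩ | ⟨b, rfl⟩)
    exacts [⟨Sum.inl (a, q), rfl⟩, ⟨Sum.inr (p, b), rfl⟩]

theorem LabelsShared.inter_mu_eq (hGH : G.LabelsShared H) (z : InterArc G H) :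
    ∃ a b, (G.inter H).mu z = (((G.mu a).1, (H.mu b).1), ((G.mu a).2, (H.mu b).2)) := by
  rcases z with ⟨_, h⟩ | ⟨_, h⟩ | ⟨⟨a, b⟩, -⟩
  · exact absurd (hGH.1 _) h
  · exact absurd (hGH.2 _) h
  · exact ⟨a, b, rfl⟩

theorem LabelsShared.inter_inDegZero (hGH : G.LabelsShared H) {v : V × V'}
    (hv : G.InDegZero v.1 ∨ H.InDegZero v.2) : (G.inter H).InDegZero v := by
  intro z hz
  obtain ⟨a, b, hab⟩ := hGH.inter_mu_eq z
  subst hz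
  rw [hab] at hv
  rcases hv with h | h
  exacts [h a rfl, h b rfl]

theorem LabelsShared.inter_outDegZero (hGH : G.LabelsShared H) {v : V × V'}
    (hv : G.OutDegZero v.1 ∨ H.OutDegZero v.2) : (G.inter H).OutDegZero v := by
  intro z hz
  obtain ⟨a, b, hab⟩ := hGH.inter_mu_eq z
  subst hz
  rw [hab] at hv
  rcases hv with h | h
  exacts [h a rfl, h b rfl]

theorem posLevelBox_of_mem_vrspRemoved {v : V × V'} (hv : v ∈ vrspRemoved G H) :
    PosLevelBox G H v := by
  obtain ⟨n, hn⟩ := Set.mem_iUnion.mp hv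
  induction n with
  | zero => exact hn.elim
  | succ n ih => exact hn.elim ih And.left

theorem mem_vrspRemoved_of_inDegZero {v : V × V'} (hin : (G.inter H).InDegZero v)
    (hpos : PosLevelBox G H v) : v ∈ vrspRemoved G H :=
  Set.mem_iUnion.mpr ⟨1, Or.inr ⟨hpos, fun z hz => absurd hz (hin z)⟩⟩

theorem inter_fst_mem_vrspRemoved {z : InterArc G H}
    (hz : ((G.inter H).mu z).2 ∈ vrspRemoved G H) :
    ((G.inter H).mu z).1 ∈ vrspRemoved G H := by
  obtain ⟨n, hn⟩ := Set.mem_iUnion.mp hz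
  induction n with
  | zero => exact hn.elim
  | succ n ih => exact hn.elim ih fun h => Set.mem_iUnion.mpr ⟨n, h.2 z rfl⟩

end Products

/-- `G` is `B(X,Y)`, possibly with parallel arcs, all arcs carrying the label `ℓ`. -/
structure IsCompleteBipartite (G : LDMG V A L) (X Y : Set V) (ℓ : L) : Prop where
  mem_or_mem : ∀ v, v ∈ X ∨ v ∈ Y
  disjoint : Disjoint X Y
  mu_mem : ∀ a, (G.mu a).1 ∈ X ∧ (G.mu a).2 ∈ Y
  exists_mu_eq : ∀ x ∈ X, ∀ y ∈ Y, ∃ a, G.mu a = (x, y)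
  lab_eq : ∀ a, G.lab a = ℓ

namespace IsCompleteBipartite

variable {G : LDMG V A L} {X Y : Set V} {ℓ : L}

theorem fst_notMem (hB : IsCompleteBipartite G X Y ℓ) (a : A) : (G.mu a).1 ∉ Y :=
  Set.disjoint_left.mp hB.disjoint (hB.mu_mem a).1

theorem snd_notMem (hB : IsCompleteBipartite G X Y ℓ) (a : A) : (G.mu a).2 ∉ X :=
  Set.disjoint_right.mp hB.disjoint (hB.mu_mem a).2

theorem labelsShared (hB : IsCompleteBipartite G X Y ℓ) (hX : X.Nonempty) (hY : Y.Nonempty) :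
    (G.contract Y).LabelsShared (G.contract X) := by
  obtain ⟨a, -⟩ := hB.exists_mu_eq _ hX.some_mem _ hY.some_mem
  have hYℓ : (G.contract Y).HasLab ℓ :=
    hB.lab_eq a ▸ hasLab_contract ⟨a, fun h => hB.fst_notMem a h.1⟩
  have hXℓ : (G.contract X).HasLab ℓ :=
    hB.lab_eq a ▸ hasLab_contract ⟨a, fun h => hB.snd_notMem a h.2⟩
  exact ⟨fun c => contract_lab_eq hB.lab_eq c ▸ hXℓ, fun c => contract_lab_eq hB.lab_eq c ▸ hYℓ⟩

theorem inDegZero_cMap_contract_Y (hB : IsCompleteBipartite G X Y ℓ) {u : V} (hu : u ∈ X) :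
    (G.contract Y).InDegZero (cMap Y u) :=
  contract_inDegZero fun a h => Set.disjoint_left.mp hB.disjoint hu <|
    cMap_eq_inr_iff.mp (h ▸ cMap_eq_inr_iff.mpr (hB.mu_mem a).2)

theorem outDegZero_inr_contract_Y (hB : IsCompleteBipartite G X Y ℓ) :
    (G.contract Y).OutDegZero (Sum.inr ()) :=
  contract_outDegZero fun a h => hB.fst_notMem a (cMap_eq_inr_iff.mp h)

theorem inDegZero_inr_contract_X (hB : IsCompleteBipartite G X Y ℓ) :
    (G.contract X).InDegZero (Sum.inr ()) :=
  contract_inDegZero fun a h => hB.snd_notMem a (cMap_eq_inr_iff.mp h)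

theorem outDegZero_cMap_contract_X (hB : IsCompleteBipartite G X Y ℓ) {v : V} (hv : v ∈ Y) :
    (G.contract X).OutDegZero (cMap X v) :=
  contract_outDegZero fun a h => Set.disjoint_right.mp hB.disjoint hv <|
    cMap_eq_inr_iff.mp (h ▸ cMap_eq_inr_iff.mpr (hB.mu_mem a).1)

theorem not_inDegZero_inr_contract_Y (hB : IsCompleteBipartite G X Y ℓ) (hX : X.Nonempty)
    (hY : Y.Nonempty) : ¬ (G.contract Y).InDegZero (Sum.inr ()) := by
  obtain ⟨a, ha⟩ := hB.exists_mu_eq _ hX.some_mem _ hY.some_mem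
  have h := not_contract_inDegZero (⟨a, fun h => hB.fst_notMem a h.1⟩ : CPre G Y)
  rwa [ha, cMap_eq_inr_iff.mpr hY.some_mem] at h

theorem not_inDegZero_cMap_contract_X (hB : IsCompleteBipartite G X Y ℓ) (hX : X.Nonempty)
    {v : V} (hv : v ∈ Y) : ¬ (G.contract X).InDegZero (cMap X v) := by
  obtain ⟨a, ha⟩ := hB.exists_mu_eq _ hX.some_mem _ hv
  have h := not_contract_inDegZero (⟨a, fun h => hB.snd_notMem a h.2⟩ : CPre G X)
  rwa [ha] at h

theorem isolated_cMap_cMap (hB : IsCompleteBipartite G X Y ℓ) (hX : X.Nonempty)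
    (hY : Y.Nonempty) {u v : V} (hu : u ∈ X) (hv : v ∈ Y) :
    ((G.contract Y).inter (G.contract X)).InDegZero (cMap Y u, cMap X v) ∧
      ((G.contract Y).inter (G.contract X)).OutDegZero (cMap Y u, cMap X v) ∧
      PosLevelBox (G.contract Y) (G.contract X) (cMap Y u, cMap X v) :=
  ⟨(hB.labelsShared hX hY).inter_inDegZero (Or.inl (hB.inDegZero_cMap_contract_Y hu)),
    (hB.labelsShared hX hY).inter_outDegZero (Or.inr (hB.outDegZero_cMap_contract_X hv)),
    posLevelBox_iff.mpr (Or.inr (hB.not_inDegZero_cMap_contract_X hX hv))⟩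

theorem isolated_inr_inr (hB : IsCompleteBipartite G X Y ℓ) (hX : X.Nonempty)
    (hY : Y.Nonempty) :
    ((G.contract Y).inter (G.contract X)).InDegZero (Sum.inr (), Sum.inr ()) ∧
      ((G.contract Y).inter (G.contract X)).OutDegZero (Sum.inr (), Sum.inr ()) ∧
      PosLevelBox (G.contract Y) (G.contract X) (Sum.inr (), Sum.inr ()) :=
  ⟨(hB.labelsShared hX hY).inter_inDegZero (Or.inr hB.inDegZero_inr_contract_X),
    (hB.labelsShared hX hY).inter_outDegZero (Or.inl hB.outDegZero_inr_contract_Y),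
    posLevelBox_iff.mpr (Or.inl (hB.not_inDegZero_inr_contract_Y hX hY))⟩

theorem cMap_inr_notMem_vrspRemoved (hB : IsCompleteBipartite G X Y ℓ) {u : V} (hu : u ∈ X) :
    (cMap Y u, Sum.inr ()) ∉ vrspRemoved (G.contract Y) (G.contract X) := fun h =>
  (posLevelBox_iff.mp (posLevelBox_of_mem_vrspRemoved h)).elim
    (· (hB.inDegZero_cMap_contract_Y hu)) (· hB.inDegZero_inr_contract_X)

theorem inr_cMap_notMem_vrspRemoved (hB : IsCompleteBipartite G X Y ℓ) (hX : X.Nonempty)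
    (hY : Y.Nonempty) {v : V} (hv : v ∈ Y) :
    (Sum.inr (), cMap X v) ∉ vrspRemoved (G.contract Y) (G.contract X) := fun h => by
  obtain ⟨x, hx⟩ := hX
  obtain ⟨y, hy⟩ := hY
  obtain ⟨a, ha⟩ := hB.exists_mu_eq x hx y hy
  obtain ⟨b, hb⟩ := hB.exists_mu_eq x hx v hv
  have hab : (G.contract Y).lab (Quotient.mk _ ⟨a, fun h => hB.fst_notMem a h.1⟩) =
      (G.contract X).lab (Quotient.mk _ ⟨b, fun h => hB.snd_notMem b h.2⟩) :=
    (contract_lab_eq hB.lab_eq _).trans (contract_lab_eq hB.lab_eq _).symm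
  let z : InterArc (G.contract Y) (G.contract X) := Sum.inr (Sum.inr ⟨(_, _), hab⟩)
  have hhead : (((G.contract Y).inter (G.contract X)).mu z).2 = (Sum.inr (), cMap X v) := by
    show (cMap Y (G.mu a).2, cMap X (G.mu b).2) = _
    rw [ha, hb, cMap_eq_inr_iff.mpr hy]
    rfl
  have htail : (((G.contract Y).inter (G.contract X)).mu z).1 = (cMap Y x, Sum.inr ()) := by
    show (cMap Y (G.mu a).1, cMap X (G.mu b).1) = _
    rw [ha, hb, cMap_eq_inr_iff.mpr hx]
    rfl
  exact hB.cMap_inr_notMem_vrspRemoved hx (htail ▸ inter_fst_mem_vrspRemoved (hhead ▸ h))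

theorem notMem_vrspRemoved_iff (hB : IsCompleteBipartite G X Y ℓ) (hX : X.Nonempty)
    (hY : Y.Nonempty) (w : CVertex Y × CVertex X) :
    w ∉ vrspRemoved (G.contract Y) (G.contract X) ↔
      (∃ u ∈ X, w = (cMap Y u, Sum.inr ())) ∨ (∃ v ∈ Y, w = (Sum.inr (), cMap X v)) := by
  have hXY := Set.disjoint_left.mp hB.disjoint
  obtain ⟨p, q⟩ := w
  rcases cVertex_eq_inr_or_cMap p with rfl | ⟨u, hu, rfl⟩ <;>
    rcases cVertex_eq_inr_or_cMap q with rfl | ⟨v, hv, rfl⟩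
  · have h := hB.isolated_inr_inr hX hY
    refine iff_of_false (not_not.mpr (mem_vrspRemoved_of_inDegZero h.1 h.2.2)) ?_
    rintro (⟨u, hu, h⟩ | ⟨v, hv, h⟩)
    · exact hXY hu (cMap_eq_inr_iff.mp (congrArg Prod.fst h).symm)
    · exact hXY (cMap_eq_inr_iff.mp (congrArg Prod.snd h).symm) hv
  · have hv := (hB.mem_or_mem v).resolve_left hv
    exact iff_of_true (hB.inr_cMap_notMem_vrspRemoved hX hY hv) (Or.inr ⟨v, hv, rfl⟩)
  · have hu := (hB.mem_or_mem u).resolve_right hu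
    exact iff_of_true (hB.cMap_inr_notMem_vrspRemoved hu) (Or.inl ⟨u, hu, rfl⟩)
  · have h := hB.isolated_cMap_cMap hX hY ((hB.mem_or_mem u).resolve_right hu)
      ((hB.mem_or_mem v).resolve_left hv)
    refine iff_of_false (not_not.mpr (mem_vrspRemoved_of_inDegZero h.1 h.2.2)) ?_
    rintro (⟨_, -, h⟩ | ⟨_, -, h⟩)
    · exact hv (cMap_eq_inr_iff.mp (congrArg Prod.snd h))
    · exact hu (cMap_eq_inr_iff.mp (congrArg Prod.fst h))

end IsCompleteBipartite

end LDMG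

theorem completeBipartite_vrsp_vertexSet_general {V A L : Type}
    (G : LDMG V A L) (X Y : Set V) (ℓ : L)
    (hcover : ∀ v : V, v ∈ X ∨ v ∈ Y) (hdisj : Disjoint X Y)
    (hXne : X.Nonempty) (hYne : Y.Nonempty)
    (harc : ∀ a : A, (G.mu a).1 ∈ X ∧ (G.mu a).2 ∈ Y)
    (hcomp : ∀ x ∈ X, ∀ y ∈ Y, ∃ a : A, G.mu a = (x, y))
    (hlab : ∀ a : A, G.lab a = ℓ) :
    (∀ u ∈ X, ∀ v ∈ Y,
        ((G.contract Y).inter (G.contract X)).InDegZero (LDMG.cMap Y u, LDMG.cMap X v) ∧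
        ((G.contract Y).inter (G.contract X)).OutDegZero (LDMG.cMap Y u, LDMG.cMap X v) ∧
        LDMG.PosLevelBox (G.contract Y) (G.contract X) (LDMG.cMap Y u, LDMG.cMap X v)) ∧
    (((G.contract Y).inter (G.contract X)).InDegZero (Sum.inr (), Sum.inr ()) ∧
        ((G.contract Y).inter (G.contract X)).OutDegZero (Sum.inr (), Sum.inr ()) ∧
        LDMG.PosLevelBox (G.contract Y) (G.contract X) (Sum.inr (), Sum.inr ())) ∧
    (∀ w : LDMG.CVertex Y × LDMG.CVertex X,
        w ∉ LDMG.vrspRemoved (G.contract Y) (G.contract X) ↔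
          (∃ u ∈ X, w = (LDMG.cMap Y u, Sum.inr ())) ∨
          (∃ v ∈ Y, w = (Sum.inr (), LDMG.cMap X v))) := by
  have hB : LDMG.IsCompleteBipartite G X Y ℓ := ⟨hcover, hdisj, harc, hcomp, hlab⟩
  exact ⟨fun u hu v hv => hB.isolated_cMap_cMap hXne hYne hu hv, hB.isolated_inr_inr hXne hYne,
    hB.notMem_vrspRemoved_iff hXne hYne⟩

/-- For complete bipartite `B(X,Y)`, in `(B/Y) ⊠ (B/X)` every vertex `(u_i, v_j)`
(`u_i ∈ X`, `v_j ∈ Y`) and the vertex `(ỹ, x̃)` has in- and out-degree 0 while having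
positive level in `(B/Y) □ (B/X)`; consequently the vertex set of `(B/Y) ⊟ (B/X)` is
exactly `{(u_i, x̃)} ∪ {(ỹ, v_j)}`. -/
theorem completeBipartite_vrsp_vertexSet {V A L : Type} [Fintype V] [Fintype A]
    (G : LDMG V A L) (X Y : Set V) (ℓ : L)
    (hcover : ∀ v : V, v ∈ X ∨ v ∈ Y) (hdisj : Disjoint X Y)
    (hXne : X.Nonempty) (hYne : Y.Nonempty)
    (harc : ∀ a : A, (G.mu a).1 ∈ X ∧ (G.mu a).2 ∈ Y)
    (hcomp : ∀ x ∈ X, ∀ y ∈ Y, ∃ a : A, G.mu a = (x, y))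
    (hsimple : Function.Injective G.mu)
    (hlab : ∀ a : A, G.lab a = ℓ) :
    (∀ u ∈ X, ∀ v ∈ Y,
        ((G.contract Y).inter (G.contract X)).InDegZero (LDMG.cMap Y u, LDMG.cMap X v) ∧
        ((G.contract Y).inter (G.contract X)).OutDegZero (LDMG.cMap Y u, LDMG.cMap X v) ∧
        LDMG.PosLevelBox (G.contract Y) (G.contract X) (LDMG.cMap Y u, LDMG.cMap X v)) ∧
    (((G.contract Y).inter (G.contract X)).InDegZero (Sum.inr (), Sum.inr ()) ∧
        ((G.contract Y).inter (G.contract X)).OutDegZero (Sum.inr (), Sum.inr ()) ∧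
        LDMG.PosLevelBox (G.contract Y) (G.contract X) (Sum.inr (), Sum.inr ())) ∧
    (∀ w : LDMG.CVertex Y × LDMG.CVertex X,
        w ∉ LDMG.vrspRemoved (G.contract Y) (G.contract X) ↔
          (∃ u ∈ X, w = (LDMG.cMap Y u, Sum.inr ())) ∨
          (∃ v ∈ Y, w = (Sum.inr (), LDMG.cMap X v))) :=
  completeBipartite_vrsp_vertexSet_general G X Y ℓ hcover hdisj hXne hYne harc hcomp hlab
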